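/- arXiv:2401.05394 — 5 statements merged into one kernel-verified Lean document; each statement's English description precedes it below -/
import Mathlib

section
/- For any w ∈ ℝ^d and any k ∈ {1,...,d}, the k-support norm satisfies ‖w‖₂ ≤ ‖w‖ₖˢᵖ ≤ ‖w‖₁. -/
/-!
The lower bound is the triangle inequality for the Euclidean norm applied to `w = ∑ I, v I`.
For the upper bound, splitting `w` into its coordinates `w i • eᵢ`, each supported on `{i}`, is an
admissible decomposition as soon as `1 ≤ k`, and its cost is `∑ i, |w i|`.
-/

noncomputable section

/-- The k-support norm: infimum of `Σ_I ‖v_I‖₂` over decompositions `w = Σ_I v_I`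
where each `v_I` is supported on `I` with `|I| ≤ k`. -/
def ksup {d : ℕ} (k : ℕ) (w : Fin d → ℝ) : ℝ :=
  sInf {s : ℝ | ∃ v : Finset (Fin d) → (Fin d → ℝ),
    (∀ I i, v I i ≠ 0 → i ∈ I ∧ I.card ≤ k) ∧
    (∑ I : Finset (Fin d), v I) = w ∧
    s = ∑ I : Finset (Fin d), Real.sqrt (∑ i, (v I i) ^ 2)}

end

section Euclidean

variable {ι : Type*} [Fintype ι]

theorem sqrt_sum_sq_eq_norm_toLp (x : ι → ℝ) :
    √(∑ i, x i ^ 2) = ‖(WithLp.toLp 2 x : EuclideanSpace ℝ ι)‖ := by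
  simp [EuclideanSpace.norm_eq]

theorem sqrt_sum_sq_sum_le {κ : Type*} (s : Finset κ) (v : κ → ι → ℝ) :
    √(∑ i, (∑ j ∈ s, v j i) ^ 2) ≤ ∑ j ∈ s, √(∑ i, v j i ^ 2) := by
  have hsum : (fun i => ∑ j ∈ s, v j i) = ∑ j ∈ s, v j := by
    funext i
    rw [Finset.sum_apply]
  simp only [sqrt_sum_sq_eq_norm_toLp, hsum, WithLp.toLp_sum]
  exact norm_sum_le _ _

end Euclidean

section Singleton

variable {ι : Type*} [DecidableEq ι]

def singletonDecomposition (w : ι → ℝ) (I : Finset ι) (i : ι) : ℝ :=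
  if I = {i} then w i else 0

theorem singletonDecomposition_mem_of_ne_zero {k : ℕ} (hk : 1 ≤ k) {w : ι → ℝ} {I : Finset ι}
    {i : ι} (h : singletonDecomposition w I i ≠ 0) : i ∈ I ∧ I.card ≤ k := by
  by_cases hI : I = {i}
  · simpa [hI] using hk
  · simp [singletonDecomposition, hI] at h

theorem sum_singletonDecomposition [Fintype ι] (w : ι → ℝ) :
    ∑ I, singletonDecomposition w I = w := by
  funext i
  simp [Finset.sum_apply, singletonDecomposition]

theorem sqrt_sum_sq_singletonDecomposition [Fintype ι] (w : ι → ℝ) (I : Finset ι) :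
    √(∑ j, singletonDecomposition w I j ^ 2) = ∑ i, if I = {i} then |w i| else 0 := by
  by_cases h : ∃ i, I = {i}
  · obtain ⟨i, rfl⟩ := h
    simp [singletonDecomposition, Real.sqrt_sq_eq_abs, eq_comm]
  · push Not at h
    simp [singletonDecomposition, h]

theorem sum_sqrt_sum_sq_singletonDecomposition [Fintype ι] (w : ι → ℝ) :
    ∑ I, √(∑ j, singletonDecomposition w I j ^ 2) = ∑ i, |w i| := by
  simp only [sqrt_sum_sq_singletonDecomposition]
  rw [Finset.sum_comm]
  simp

end Singleton

section KSupport

variable {d k : ℕ}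

theorem ksup_le_of_decomposition {w : Fin d → ℝ} (v : Finset (Fin d) → Fin d → ℝ)
    (hv : ∀ I i, v I i ≠ 0 → i ∈ I ∧ I.card ≤ k) (hw : ∑ I, v I = w) :
    ksup k w ≤ ∑ I, √(∑ i, v I i ^ 2) := by
  refine csInf_le ⟨0, ?_⟩ ⟨v, hv, hw, rfl⟩
  rintro _ ⟨u, -, -, rfl⟩
  positivity

theorem ksup_le_sum_abs (hk : 1 ≤ k) (w : Fin d → ℝ) : ksup k w ≤ ∑ i, |w i| := by
  rw [← sum_sqrt_sum_sq_singletonDecomposition]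
  exact ksup_le_of_decomposition _ (fun _ _ => singletonDecomposition_mem_of_ne_zero hk)
    (sum_singletonDecomposition w)

theorem sqrt_sum_sq_le_ksup (hk : 1 ≤ k) (w : Fin d → ℝ) : √(∑ i, w i ^ 2) ≤ ksup k w := by
  refine le_csInf ⟨_, singletonDecomposition w,
    fun _ _ => singletonDecomposition_mem_of_ne_zero hk, sum_singletonDecomposition w, rfl⟩ ?_
  rintro _ ⟨v, -, rfl, rfl⟩
  simpa only [Finset.sum_apply] using sqrt_sum_sq_sum_le Finset.univ v

end KSupport

theorem l2_le_ksup_le_l1_general {d : ℕ} (k : ℕ) (hk1 : 1 ≤ k)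
    (w : Fin d → ℝ) :
    Real.sqrt (∑ i, (w i) ^ 2) ≤ ksup k w ∧ ksup k w ≤ ∑ i, |w i| :=
  ⟨sqrt_sum_sq_le_ksup hk1 w, ksup_le_sum_abs hk1 w⟩

/-- The k-support norm is sandwiched between the ℓ2 and ℓ1 norms. -/
theorem l2_le_ksup_le_l1 {d : ℕ} (k : ℕ) (hk1 : 1 ≤ k) (hk2 : k ≤ d)
    (w : Fin d → ℝ) :
    Real.sqrt (∑ i, (w i) ^ 2) ≤ ksup k w ∧ ksup k w ≤ ∑ i, |w i| :=
  l2_le_ksup_le_l1_general k hk1 w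
end

section
/- The dual norm of the k-support norm on ℝ^d is the top-k norm, defined as ‖w‖₍ₖ₎ = the ℓ2 norm of the vector consisting of the k largest-in-absolute-value entries of w. -/
noncomputable section

/-- The top-k norm: ℓ2 norm of the `k` largest-in-absolute-value entries,
expressed as the supremum of `‖w_I‖₂` over subsets `I` of cardinality `k`. -/
def topk {d : ℕ} (k : ℕ) (w : Fin d → ℝ) : ℝ :=
  sSup {s : ℝ | ∃ I : Finset (Fin d), I.card = k ∧
    s = Real.sqrt (∑ i ∈ I, (w i) ^ 2)}

/-!
Split `w = ∑ I, v I` with `#I ≤ k`. Cauchy–Schwarz on each block gives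
`⟪y, v I⟫ ≤ ‖y_I‖₂ ‖v I‖₂ ≤ topk k y * ‖v I‖₂`, hence `⟪y, w⟫ ≤ topk k y * ksup k w`.
Conversely, for `#I = k` the unit vector `y_I / ‖y_I‖₂` is its own one-block decomposition,
so its k-support norm is at most `1`, and it pairs with `y` to `‖y_I‖₂`.
-/

open Finset

lemma sum_univ_eq_sum_of_support_subset {ι M : Type*} [Fintype ι] [AddCommMonoid M]
    {s : Finset ι} {f : ι → M} (hf : ∀ i, f i ≠ 0 → i ∈ s) : ∑ i, f i = ∑ i ∈ s, f i :=
  (sum_subset (subset_univ s) fun i _ hi ↦ not_not.1 (mt (hf i) hi)).symm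

section

variable {d k : ℕ}

def ksupCosts (k : ℕ) (w : Fin d → ℝ) : Set ℝ :=
  {s : ℝ | ∃ v : Finset (Fin d) → (Fin d → ℝ),
    (∀ I i, v I i ≠ 0 → i ∈ I ∧ #I ≤ k) ∧ ∑ I, v I = w ∧ s = ∑ I, √(∑ i, v I i ^ 2)}

lemma ksup_eq_sInf_ksupCosts (k : ℕ) (w : Fin d → ℝ) : ksup k w = sInf (ksupCosts k w) := rfl

lemma ksupCosts_nonempty (hk : 1 ≤ k) (w : Fin d → ℝ) : (ksupCosts k w).Nonempty := by
  refine ⟨_, fun I i ↦ if I = {i} then w i else 0, fun I i h ↦ ?_, ?_, rfl⟩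
  · obtain rfl : I = {i} := by by_contra hI; simp [hI] at h
    simpa using hk
  · funext i
    simp [Finset.sum_apply]

lemma ksup_le_sqrt {I : Finset (Fin d)} (hI : #I ≤ k) {w : Fin d → ℝ}
    (hw : ∀ i, w i ≠ 0 → i ∈ I) : ksup k w ≤ √(∑ i, w i ^ 2) := by
  refine csInf_le ⟨0, ?_⟩ ⟨Pi.single I w, fun J i h ↦ ?_, ?_, ?_⟩
  · rintro _ ⟨v, -, -, rfl⟩
    exact sum_nonneg fun I _ ↦ Real.sqrt_nonneg _
  · obtain rfl : J = I := by by_contra hJ; simp [hJ] at h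
    exact ⟨hw i (by simpa using h), hI⟩
  · simp
  · rw [sum_eq_single I (fun J _ hJ ↦ by simp [hJ]) (by simp)]
    simp

lemma sqrt_sum_sq_le_topk (hk : k ≤ d) (y : Fin d → ℝ) {I : Finset (Fin d)}
    (hI : #I ≤ k) : √(∑ i ∈ I, y i ^ 2) ≤ topk k y := by
  obtain ⟨J, hIJ, hJ⟩ := exists_superset_card_eq hI (by simpa using hk)
  have hfin : {s : ℝ | ∃ J : Finset (Fin d), #J = k ∧ s = √(∑ i ∈ J, y i ^ 2)}.Finite :=
    (Set.finite_range fun J : Finset (Fin d) ↦ √(∑ i ∈ J, y i ^ 2)).subset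
      (by rintro _ ⟨J, -, rfl⟩; exact ⟨J, rfl⟩)
  calc √(∑ i ∈ I, y i ^ 2) ≤ √(∑ i ∈ J, y i ^ 2) :=
        Real.sqrt_le_sqrt (sum_le_sum_of_subset_of_nonneg hIJ fun i _ _ ↦ sq_nonneg _)
    _ ≤ topk k y := le_csSup hfin.bddAbove ⟨J, hJ, rfl⟩

lemma topk_nonneg (hk : k ≤ d) (y : Fin d → ℝ) : 0 ≤ topk k y := by
  simpa using sqrt_sum_sq_le_topk hk y (I := ∅) (Nat.zero_le k)

lemma sum_mul_le_topk_mul_sqrt (hk : k ≤ d) (y v : Fin d → ℝ) {I : Finset (Fin d)}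
    (hI : #I ≤ k) (hv : ∀ i, v i ≠ 0 → i ∈ I) :
    ∑ i, y i * v i ≤ topk k y * √(∑ i, v i ^ 2) := by
  rw [sum_univ_eq_sum_of_support_subset (s := I) fun i h ↦ hv i (right_ne_zero_of_mul h),
    sum_univ_eq_sum_of_support_subset (s := I) fun i h ↦ hv i (pow_ne_zero_iff two_ne_zero |>.1 h)]
  calc ∑ i ∈ I, y i * v i ≤ √(∑ i ∈ I, y i ^ 2) * √(∑ i ∈ I, v i ^ 2) :=
        Real.sum_mul_le_sqrt_mul_sqrt I y v
    _ ≤ topk k y * √(∑ i ∈ I, v i ^ 2) := by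
        gcongr; exact sqrt_sum_sq_le_topk hk y hI

lemma sum_mul_le_topk_mul_of_mem_ksupCosts (hk : k ≤ d) (y w : Fin d → ℝ) {s : ℝ}
    (hs : s ∈ ksupCosts k w) : ∑ i, y i * w i ≤ topk k y * s := by
  obtain ⟨v, hv, rfl, rfl⟩ := hs
  simp only [Finset.sum_apply, mul_sum]
  rw [sum_comm]
  refine sum_le_sum fun I _ ↦ ?_
  by_cases hvI : v I = 0
  · simp [hvI]
  obtain ⟨i₀, hi₀⟩ := Function.ne_iff.1 hvI
  exact sum_mul_le_topk_mul_sqrt hk y (v I) (hv I i₀ hi₀).2 fun i h ↦ (hv I i h).1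

lemma sum_mul_le_topk_mul_ksup (hk1 : 1 ≤ k) (hk2 : k ≤ d) (y w : Fin d → ℝ) :
    ∑ i, y i * w i ≤ topk k y * ksup k w := by
  rcases (topk_nonneg hk2 y).eq_or_lt with h0 | hpos
  · obtain ⟨s, hs⟩ := ksupCosts_nonempty hk1 w
    simpa [← h0] using sum_mul_le_topk_mul_of_mem_ksupCosts hk2 y w hs
  rw [← div_le_iff₀' hpos, ksup_eq_sInf_ksupCosts]
  exact le_csInf (ksupCosts_nonempty hk1 w) fun s hs ↦
    (div_le_iff₀' hpos).2 (sum_mul_le_topk_mul_of_mem_ksupCosts hk2 y w hs)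

/-- The witness is `y` restricted to `I` and divided by `c = ‖y_I‖₂`; at `c = 0` the junk
value `y i / 0 = 0` makes it `0`, so no case split is needed. -/
lemma exists_ksup_le_one_sum_mul_eq (y : Fin d → ℝ) {I : Finset (Fin d)} (hI : #I ≤ k) :
    ∃ w, ksup k w ≤ 1 ∧ ∑ i, y i * w i = √(∑ i ∈ I, y i ^ 2) := by
  set c := √(∑ i ∈ I, y i ^ 2)
  have hc : c ^ 2 = ∑ i ∈ I, y i ^ 2 := Real.sq_sqrt (sum_nonneg fun i _ ↦ sq_nonneg _)
  refine ⟨fun i ↦ if i ∈ I then y i / c else 0, ?_, ?_⟩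
  · refine (ksup_le_sqrt hI fun i h ↦ by by_contra hi; simp [hi] at h).trans ?_
    simp only [ite_pow, zero_pow two_ne_zero, sum_ite_mem, univ_inter, div_pow, ← sum_div, ← hc]
    exact Real.sqrt_le_one.2 (div_self_le_one _)
  · simp only [mul_ite, mul_zero, sum_ite_mem, univ_inter, mul_div_assoc', ← sq, ← sum_div, ← hc]
    rw [sq, mul_self_div_self]

end

/-- The dual norm of the k-support norm is the top-k norm:
`sup {⟨y,w⟩ : ‖w‖ₖˢᵖ ≤ 1} = ‖y‖₍ₖ₎`. -/
theorem dual_of_ksup_eq_topk {d : ℕ} (k : ℕ) (hk1 : 1 ≤ k) (hk2 : k ≤ d) :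
    ∀ y : Fin d → ℝ,
      IsLUB {r : ℝ | ∃ w, ksup k w ≤ 1 ∧ r = ∑ i, y i * w i} (topk k y) := by
  intro y
  refine ⟨?_, fun b hb ↦ ?_⟩
  · rintro _ ⟨w, hw, rfl⟩
    calc ∑ i, y i * w i ≤ topk k y * ksup k w := sum_mul_le_topk_mul_ksup hk1 hk2 y w
      _ ≤ topk k y * 1 := by gcongr; exact topk_nonneg hk2 y
      _ = topk k y := mul_one _
  · obtain ⟨I, -, hI⟩ := exists_subset_card_eq (s := (univ : Finset (Fin d))) (by simpa using hk2)
    refine csSup_le ⟨_, I, hI, rfl⟩ ?_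
    rintro _ ⟨J, hJ, rfl⟩
    obtain ⟨w, hw, hyw⟩ := exists_ksup_le_one_sum_mul_eq y hJ.le
    exact hb ⟨w, hw, hyw.symm⟩
end
end

section
/- Let n(w) = (1/2)‖w‖₍ₖ₎² be the half-squared top-k norm on ℝ^d. Then for every w, the subdifferential ∂n(w) equals the convex hull of π_HT(w), the set of all hard-thresholdings of w keeping k largest-in-absolute-value entries. -/
/-!
Write `½‖u‖₍ₖ₎² = max_{#I = k} ½ ∑_{i ∈ I} uᵢ²`, a maximum of finitely many convex
quadratics whose gradients at `w` are the truncations `w_I`. The truncations `w_I` with `I`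
attaining the maximum are exactly the hard-thresholdings of `w`. Each of them is a
subgradient, since `½ ∑_I zᵢ² ≥ ½ ∑_I wᵢ² + ⟨w_I, z - w⟩`, and subdifferentials are convex.
Conversely, a subgradient `v` outside their convex hull is separated from it by a direction
`h`; along `w + t h` only the maximizing `I` matter for small `t > 0`, so the subgradient
inequality forces `⟨v, h⟩ ≤ max_I ⟨w_I, h⟩`, a contradiction.
-/


noncomputable section

/-- Subdifferential of a function `g : ℝ^d → ℝ` at `w`. -/
def subdiff {d : ℕ} (g : (Fin d → ℝ) → ℝ) (w : Fin d → ℝ) : Set (Fin d → ℝ) :=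
  {v | ∀ z, g w + ∑ i, v i * (z i - w i) ≤ g z}

/-- The hard-thresholding set: minimizers of `‖z - w‖₂²` over `k`-sparse `z`. -/
def htSet {d : ℕ} (k : ℕ) (w : Fin d → ℝ) : Set (Fin d → ℝ) :=
  {z | (Finset.univ.filter fun i => z i ≠ 0).card ≤ k ∧
    ∀ z' : Fin d → ℝ, (Finset.univ.filter fun i => z' i ≠ 0).card ≤ k →
      (∑ i, (z i - w i) ^ 2) ≤ ∑ i, (z' i - w i) ^ 2}

open Finset Filter Topology Matrix

section Coordinates

variable {ι : Type*} [Fintype ι]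

lemma indicator_dotProduct (I : Finset ι) (w h : ι → ℝ) :
    (I : Set ι).indicator w ⬝ᵥ h = ∑ i ∈ I, w i * h i := by
  simp only [dotProduct, ← Set.indicator_mul_left]
  exact sum_indicator_subset _ (subset_univ I)

lemma card_filter_indicator_ne_zero_le (I : Finset ι) (w : ι → ℝ) :
    #(univ.filter fun i => (I : Set ι).indicator w i ≠ 0) ≤ #I :=
  card_le_card fun i hi => by
    by_contra h
    simp [Set.indicator_of_notMem (mem_coe.not.2 h)] at hi

lemma exists_card_eq_forall_notMem_eq_zero {k : ℕ} (hk : k ≤ Fintype.card ι) {z : ι → ℝ}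
    (hz : #(univ.filter fun i => z i ≠ 0) ≤ k) :
    ∃ I : Finset ι, #I = k ∧ ∀ i ∉ I, z i = 0 := by
  obtain ⟨I, hsub, hI⟩ := exists_superset_card_eq hz hk
  refine ⟨I, hI, fun i hi => ?_⟩
  by_contra h
  exact hi (hsub (by simpa using h))

lemma sum_sq_sub_eq_of_forall_notMem_eq_zero [DecidableEq ι] {I : Finset ι} {z : ι → ℝ}
    (hz : ∀ i ∉ I, z i = 0) (w : ι → ℝ) :
    ∑ i, (z i - w i) ^ 2
      = ∑ i ∈ I, (z i - w i) ^ 2 + (∑ i, w i ^ 2 - ∑ i ∈ I, w i ^ 2) := by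
  rw [← sum_add_sum_compl I fun i => (z i - w i) ^ 2, ← sum_add_sum_compl I fun i => w i ^ 2]
  have hcompl : ∑ i ∈ Iᶜ, (z i - w i) ^ 2 = ∑ i ∈ Iᶜ, w i ^ 2 :=
    sum_congr rfl fun i hi => by rw [hz i (mem_compl.1 hi), zero_sub, neg_sq]
  linarith

lemma sum_sq_indicator_sub [DecidableEq ι] (I : Finset ι) (w : ι → ℝ) :
    ∑ i, ((I : Set ι).indicator w i - w i) ^ 2 = ∑ i, w i ^ 2 - ∑ i ∈ I, w i ^ 2 := by
  rw [sum_sq_sub_eq_of_forall_notMem_eq_zero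
      (fun i hi => Set.indicator_of_notMem (mem_coe.not.2 hi) w),
    sum_eq_zero fun i hi => by rw [Set.indicator_of_mem (mem_coe.2 hi), sub_self, sq, mul_zero],
    zero_add]

lemma exists_dotProduct_lt_of_notMem_convexHull {S : Set (ι → ℝ)} (hS : S.Finite)
    {v : ι → ℝ} (hv : v ∉ convexHull ℝ S) :
    ∃ h : ι → ℝ, ∀ s ∈ S, s ⬝ᵥ h < v ⬝ᵥ h := by
  classical
  obtain ⟨f, u, hfS, hfv⟩ := geometric_hahn_banach_closed_point (convex_convexHull ℝ S)
    (hS.isCompact_convexHull (𝕜 := ℝ)).isClosed hv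
  have hf : ∀ x, f x = x ⬝ᵥ fun i => f fun j => if i = j then 1 else 0 := fun x => by
    simpa [dotProduct] using LinearMap.pi_apply_eq_sum_univ f.toLinearMap x
  refine ⟨fun i => f fun j => if i = j then 1 else 0, fun s hs => ?_⟩
  rw [← hf, ← hf]
  exact (hfS s (subset_convexHull ℝ S hs)).trans hfv

end Coordinates

lemma convex_subdiff {d : ℕ} (g : (Fin d → ℝ) → ℝ) (w : Fin d → ℝ) :
    Convex ℝ (subdiff g w) := by
  intro v₁ h₁ v₂ h₂ a b ha hb hab z
  have e₁ := mul_le_mul_of_nonneg_left (h₁ z) ha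
  have e₂ := mul_le_mul_of_nonneg_left (h₂ z) hb
  change g w + (a • v₁ + b • v₂) ⬝ᵥ (z - w) ≤ g z
  change a * (g w + v₁ ⬝ᵥ (z - w)) ≤ a * g z at e₁
  change b * (g w + v₂ ⬝ᵥ (z - w)) ≤ b * g z at e₂
  rw [add_dotProduct, smul_dotProduct, smul_dotProduct, smul_eq_mul, smul_eq_mul]
  linear_combination e₁ + e₂ + (g z - g w) * hab

lemma eventually_add_mul_add_sq_mul_lt {a b c a' b' : ℝ} (h : a < a' ∨ a = a' ∧ b < b') :
    ∀ᶠ t in 𝓝[>] (0 : ℝ), a + t * b + t ^ 2 * c < a' + t * b' := by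
  rcases h with h | ⟨rfl, h⟩
  · exact eventually_nhdsWithin_of_eventually_nhds <|
      ContinuousAt.eventually_lt (by fun_prop) (by fun_prop) (by simpa using h)
  · have hb : ∀ᶠ t in 𝓝 (0 : ℝ), b + t * c < b' :=
      ContinuousAt.eventually_lt (by fun_prop) (by fun_prop) (by simpa using h)
    filter_upwards [eventually_nhdsWithin_of_eventually_nhds hb, self_mem_nhdsWithin]
      with t ht (ht₀ : 0 < t)
    nlinarith

variable {d k : ℕ}

lemma isGreatest_topk_sq (hk : k ≤ d) (u : Fin d → ℝ) :
    IsGreatest ((fun I => ∑ i ∈ I, u i ^ 2) '' {I | #I = k}) (topk k u ^ 2) := by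
  obtain ⟨I₀, -, hI₀⟩ :=
    exists_superset_card_eq (s := (∅ : Finset (Fin d))) (Nat.zero_le k) (by simpa using hk)
  obtain ⟨J, hJ, hmax⟩ := Set.exists_max_image {I : Finset (Fin d) | #I = k}
    (fun I => ∑ i ∈ I, u i ^ 2) (Set.toFinite _) ⟨I₀, hI₀⟩
  have htopk : topk k u = √(∑ i ∈ J, u i ^ 2) := by
    refine IsGreatest.csSup_eq ⟨⟨J, hJ, rfl⟩, ?_⟩
    rintro _ ⟨I, hI, rfl⟩
    exact Real.sqrt_le_sqrt (hmax I hI)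
  rw [htopk, Real.sq_sqrt (sum_nonneg fun i _ => sq_nonneg _)]
  exact ⟨⟨J, hJ, rfl⟩, by rintro _ ⟨I, hI, rfl⟩; exact hmax I hI⟩

lemma sum_sq_le_topk_sq (hk : k ≤ d) (u : Fin d → ℝ) {I : Finset (Fin d)} (hI : #I = k) :
    ∑ i ∈ I, u i ^ 2 ≤ topk k u ^ 2 :=
  (isGreatest_topk_sq hk u).2 ⟨I, hI, rfl⟩

lemma exists_sum_sq_eq_topk_sq (hk : k ≤ d) (u : Fin d → ℝ) :
    ∃ I : Finset (Fin d), #I = k ∧ ∑ i ∈ I, u i ^ 2 = topk k u ^ 2 :=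
  (isGreatest_topk_sq hk u).1

def topkSets (k : ℕ) (w : Fin d → ℝ) : Set (Finset (Fin d)) :=
  {I | #I = k ∧ ∑ i ∈ I, w i ^ 2 = topk k w ^ 2}

lemma sub_topk_sq_le_sum_sq_sub (hk : k ≤ d) (w : Fin d → ℝ) {z : Fin d → ℝ}
    (hz : #(univ.filter fun i => z i ≠ 0) ≤ k) :
    ∑ i, w i ^ 2 - topk k w ^ 2 ≤ ∑ i, (z i - w i) ^ 2 := by
  obtain ⟨I, hI, hzI⟩ := exists_card_eq_forall_notMem_eq_zero (by simpa using hk) hz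
  rw [sum_sq_sub_eq_of_forall_notMem_eq_zero hzI]
  have hIw := sum_sq_le_topk_sq hk w hI
  have hzw := sum_nonneg fun i (_ : i ∈ I) => sq_nonneg (z i - w i)
  linarith

theorem htSet_eq_image_topkSets (hk : k ≤ d) (w : Fin d → ℝ) :
    htSet k w = (fun I : Finset (Fin d) => (I : Set (Fin d)).indicator w) '' topkSets k w := by
  ext z
  constructor
  · rintro ⟨hz, hmin⟩
    obtain ⟨I₀, hI₀, hI₀w⟩ := exists_sum_sq_eq_topk_sq hk w
    obtain ⟨I, hI, hzI⟩ := exists_card_eq_forall_notMem_eq_zero (by simpa using hk) hz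
    -- comparing `z` with the truncation `w_{I₀}` forces `z = w` on `I` and `I` maximizing
    have hle := hmin _ ((card_filter_indicator_ne_zero_le I₀ w).trans hI₀.le)
    rw [sum_sq_indicator_sub, hI₀w, sum_sq_sub_eq_of_forall_notMem_eq_zero hzI] at hle
    have hIw := sum_sq_le_topk_sq hk w hI
    have hzw := sum_nonneg fun i (_ : i ∈ I) => sq_nonneg (z i - w i)
    have hzw₀ : ∑ i ∈ I, (z i - w i) ^ 2 = 0 := by linarith
    refine ⟨I, ⟨hI, by linarith⟩, funext fun i => ?_⟩
    dsimp only
    by_cases hi : i ∈ I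
    · rw [Set.indicator_of_mem (mem_coe.2 hi)]
      have := (sum_eq_zero_iff_of_nonneg fun i _ => sq_nonneg (z i - w i)).1 hzw₀ i hi
      exact (sub_eq_zero.1 (pow_eq_zero_iff two_ne_zero |>.1 this)).symm
    · rw [Set.indicator_of_notMem (mem_coe.not.2 hi), hzI i hi]
  · rintro ⟨I, ⟨hI, hIw⟩, rfl⟩
    refine ⟨(card_filter_indicator_ne_zero_le I w).trans hI.le, fun z' hz' => ?_⟩
    rw [sum_sq_indicator_sub, hIw]
    exact sub_topk_sq_le_sum_sq_sub hk w hz'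

lemma indicator_mem_subdiff (hk : k ≤ d) {w : Fin d → ℝ} {I : Finset (Fin d)}
    (hI : I ∈ topkSets k w) :
    (I : Set (Fin d)).indicator w ∈ subdiff (fun u => 1 / 2 * topk k u ^ 2) w := by
  obtain ⟨hIc, hIw⟩ := hI
  intro z
  change 1 / 2 * topk k w ^ 2 + (I : Set (Fin d)).indicator w ⬝ᵥ (z - w)
    ≤ 1 / 2 * topk k z ^ 2
  have hz := sum_sq_le_topk_sq hk z hIc
  have hquad : ∑ i ∈ I, (1 / 2 * w i ^ 2 + w i * (z - w) i) ≤ ∑ i ∈ I, 1 / 2 * z i ^ 2 :=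
    sum_le_sum fun i _ => by simp only [Pi.sub_apply]; nlinarith [sq_nonneg (z i - w i)]
  rw [sum_add_distrib, ← mul_sum, ← mul_sum] at hquad
  rw [indicator_dotProduct, ← hIw]
  linarith

lemma exists_mem_topkSets_dotProduct_le (hk : k ≤ d) {w v : Fin d → ℝ}
    (hv : v ∈ subdiff (fun u => 1 / 2 * topk k u ^ 2) w) (h : Fin d → ℝ) :
    ∃ I ∈ topkSets k w, v ⬝ᵥ h ≤ (I : Set (Fin d)).indicator w ⬝ᵥ h := by
  by_contra! hlt
  have hJ : ∀ J : {J : Finset (Fin d) // #J = k}, ∀ᶠ t in 𝓝[>] (0 : ℝ),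
      1 / 2 * ∑ i ∈ J.1, (w + t • h) i ^ 2 < 1 / 2 * topk k w ^ 2 + t * (v ⬝ᵥ h) := by
    rintro ⟨J, hJ⟩
    have hexpand : ∀ t : ℝ, 1 / 2 * ∑ i ∈ J, (w + t • h) i ^ 2
        = 1 / 2 * ∑ i ∈ J, w i ^ 2 + t * ((J : Set (Fin d)).indicator w ⬝ᵥ h)
          + t ^ 2 * (1 / 2 * ∑ i ∈ J, h i ^ 2) := by
      intro t
      simp only [indicator_dotProduct, mul_sum, ← sum_add_distrib]
      exact sum_congr rfl fun i _ => by simp only [Pi.add_apply, Pi.smul_apply, smul_eq_mul]; ring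
    simp_rw [hexpand]
    apply eventually_add_mul_add_sq_mul_lt
    rcases (sum_sq_le_topk_sq hk w hJ).lt_or_eq with hJw | hJw
    · exact Or.inl (by linarith)
    · exact Or.inr ⟨by rw [hJw], hlt J ⟨hJ, hJw⟩⟩
  obtain ⟨t, ht⟩ := (eventually_all.2 hJ).exists
  obtain ⟨J, hJ, hJeq⟩ := exists_sum_sq_eq_topk_sq hk (w + t • h)
  have hsub := hv (w + t • h)
  change 1 / 2 * topk k w ^ 2 + v ⬝ᵥ (w + t • h - w) ≤ 1 / 2 * topk k (w + t • h) ^ 2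
    at hsub
  rw [add_sub_cancel_left, dotProduct_smul, smul_eq_mul, ← hJeq] at hsub
  exact (ht ⟨J, hJ⟩).not_ge hsub

lemma subdiff_subset_convexHull_image_topkSets (hk : k ≤ d) (w : Fin d → ℝ) :
    subdiff (fun u => 1 / 2 * topk k u ^ 2) w
      ⊆ convexHull ℝ
          ((fun I : Finset (Fin d) => (I : Set (Fin d)).indicator w) '' topkSets k w) := by
  intro v hv
  by_contra hvS
  obtain ⟨h, hsep⟩ := exists_dotProduct_lt_of_notMem_convexHull ((Set.toFinite _).image _) hvS
  obtain ⟨I, hI, hle⟩ := exists_mem_topkSets_dotProduct_le hk hv h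
  exact (hsep _ ⟨I, hI, rfl⟩).not_ge hle

theorem subdiff_half_squared_topk_general {d : ℕ} (k : ℕ) (hk2 : k ≤ d)
    (w : Fin d → ℝ) :
    subdiff (fun u => (1 / 2) * (topk k u) ^ 2) w = convexHull ℝ (htSet k w) := by
  rw [htSet_eq_image_topkSets hk2]
  refine (subdiff_subset_convexHull_image_topkSets hk2 w).antisymm
    (convexHull_min ?_ (convex_subdiff _ w))
  rintro _ ⟨I, hI, rfl⟩
  exact indicator_mem_subdiff hk2 hI

/-- The subdifferential of the half-squared top-k norm at `w` equals the convex
hull of the set of hard-thresholdings of `w`. -/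
theorem subdiff_half_squared_topk {d : ℕ} (k : ℕ) (hk1 : 1 ≤ k) (hk2 : k ≤ d)
    (w : Fin d → ℝ) :
    subdiff (fun u => (1 / 2) * (topk k u) ^ 2) w = convexHull ℝ (htSet k w) :=
  subdiff_half_squared_topk_general k hk2 w
end
end

section
/- Suppose X ∈ ℝ^{n×d}, w* ∈ ℝ^d is supported on S ⊆ {1,...,d} with Xw* = y, X_S is injective, and max_{ℓ ∉ S} |⟨X_S† x_ℓ, sgn(w*_S)⟩| < 1. Then λ := (X_S†)ᵀ sgn(w*_S) satisfies: Xᵀλ ∈ ∂‖·‖₁(w*) and |⟨x_i, λ⟩| < 1 for every i ∉ S. -/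
/-!
Injectivity of `X_S` together with `X_S X_S† X_S = X_S` makes `X_S†` a left inverse of `X_S`, so
`X_S† x_i` is the `i`-th unit vector for `i ∈ S` and `⟨x_i, λ⟩ = ⟨X_S† x_i, sgn(w*_S)⟩` equals
`sgn(w*_i)` there. Off `S` the same identity turns `|⟨x_i, λ⟩|` into the irrepresentability
quantity, which is `< 1` by assumption.
-/

open Matrix

namespace Matrix

variable {R m n k : Type*} [Fintype m]

theorem mul_eq_one_of_mul_mul_eq_self [Semiring R] [Fintype n] [DecidableEq n]
    {A : Matrix m n R} {B : Matrix n m R} (hinj : Function.Injective A.mulVec)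
    (h : A * B * A = A) : B * A = 1 :=
  ext_iff_mulVec.2 fun v => hinj <| by
    rw [mulVec_mulVec, ← Matrix.mul_assoc, h, one_mulVec]

theorem transpose_mulVec_transpose_mulVec_apply [CommSemiring R] [Fintype n]
    (X : Matrix m k R) (P : Matrix n m R) (s : n → R) (i : k) :
    (Xᵀ *ᵥ (Pᵀ *ᵥ s)) i = ∑ j, (P *ᵥ fun a => X a i) j * s j := by
  rw [mulVec_transpose, mulVec_transpose, vecMul_vecMul]
  simp only [vecMul, dotProduct, mul_apply, mulVec, mul_comm]

theorem transpose_mulVec_transpose_mulVec_apply_of_mem [CommSemiring R] [DecidableEq k]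
    {S : Finset k} {X : Matrix m k R} {XS : Matrix m S R} (hXS : ∀ a (j : S), XS a j = X a j)
    {P : Matrix S m R} (hP : P * XS = 1) (s : S → R) {i : k} (hi : i ∈ S) :
    (Xᵀ *ᵥ (Pᵀ *ᵥ s)) i = s ⟨i, hi⟩ := by
  have hcol : (P *ᵥ fun a => X a i) = Pi.single ⟨i, hi⟩ 1 := by
    ext j
    simp only [mulVec, dotProduct, ← hXS _ ⟨i, hi⟩]
    rw [← mul_apply, hP, one_apply, Pi.single_apply]
  simp [transpose_mulVec_transpose_mulVec_apply, hcol, Pi.single_apply]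

end Matrix

theorem l1_source_condition_general {n d : ℕ}
    (X : Matrix (Fin n) (Fin d) ℝ) (S : Finset (Fin d))
    (w : Fin d → ℝ)
    (XS : Matrix (Fin n) S ℝ) (hXS : ∀ i (j : S), XS i j = X i (j : Fin d))
    (Xp : Matrix S (Fin n) ℝ)
    (h1 : XS * Xp * XS = XS)
    (hsupp : ∀ i, i ∉ S → w i = 0)
    (hinj : Function.Injective XS.mulVec)
    (hirr : ∀ ℓ, ℓ ∉ S →
      |∑ j : S, Xp.mulVec (fun i => X i ℓ) j * Real.sign (w (j : Fin d))| < 1) :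
    (∀ i, w i ≠ 0 →
      Xᵀ.mulVec (Xpᵀ.mulVec fun j : S => Real.sign (w (j : Fin d))) i
        = Real.sign (w i)) ∧
    (∀ i, w i = 0 →
      |Xᵀ.mulVec (Xpᵀ.mulVec fun j : S => Real.sign (w (j : Fin d))) i| ≤ 1) ∧
    (∀ i, i ∉ S →
      |Xᵀ.mulVec (Xpᵀ.mulVec fun j : S => Real.sign (w (j : Fin d))) i| < 1) := by
  have hon : ∀ i (hi : i ∈ S),
      Xᵀ.mulVec (Xpᵀ.mulVec fun j : S => Real.sign (w j)) i = Real.sign (w i) :=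
    fun i hi => transpose_mulVec_transpose_mulVec_apply_of_mem hXS
      (mul_eq_one_of_mul_mul_eq_self hinj h1) _ hi
  have hoff : ∀ i, i ∉ S →
      |Xᵀ.mulVec (Xpᵀ.mulVec fun j : S => Real.sign (w j)) i| < 1 := fun i hi => by
    rw [transpose_mulVec_transpose_mulVec_apply]
    exact hirr i hi
  refine ⟨fun i hwi => hon i (not_imp_comm.1 (hsupp i) hwi), fun i hwi => ?_, hoff⟩
  by_cases hi : i ∈ S
  · simp [hon i hi, hwi]
  · exact (hoff i hi).le

/-- If `w*` is supported on `S`, `Xw* = y`, `X_S` is injective, and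
`max_{ℓ∉S} |⟨X_S† x_ℓ, sgn(w*_S)⟩| < 1`, then `λ := (X_S†)ᵀ sgn(w*_S)` satisfies
`Xᵀλ ∈ ∂‖·‖₁(w*)` (componentwise: equal to `sgn(w*_i)` where `w*_i ≠ 0`, in
`[-1,1]` where `w*_i = 0`) and `|⟨x_i, λ⟩| < 1` for every `i ∉ S`. -/
theorem l1_source_condition {n d : ℕ}
    (X : Matrix (Fin n) (Fin d) ℝ) (S : Finset (Fin d))
    (w : Fin d → ℝ) (y : Fin n → ℝ)
    (XS : Matrix (Fin n) S ℝ) (hXS : ∀ i (j : S), XS i j = X i (j : Fin d))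
    (Xp : Matrix S (Fin n) ℝ)
    (h1 : XS * Xp * XS = XS) (h2 : Xp * XS * Xp = Xp)
    (h3 : (XS * Xp)ᵀ = XS * Xp) (h4 : (Xp * XS)ᵀ = Xp * XS)
    (hsupp : ∀ i, i ∉ S → w i = 0)
    (hXw : X.mulVec w = y)
    (hinj : Function.Injective XS.mulVec)
    (hirr : ∀ ℓ, ℓ ∉ S →
      |∑ j : S, Xp.mulVec (fun i => X i ℓ) j * Real.sign (w (j : Fin d))| < 1) :
    (∀ i, w i ≠ 0 →
      Xᵀ.mulVec (Xpᵀ.mulVec fun j : S => Real.sign (w (j : Fin d))) i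
        = Real.sign (w i)) ∧
    (∀ i, w i = 0 →
      |Xᵀ.mulVec (Xpᵀ.mulVec fun j : S => Real.sign (w (j : Fin d))) i| ≤ 1) ∧
    (∀ i, i ∉ S →
      |Xᵀ.mulVec (Xpᵀ.mulVec fun j : S => Real.sign (w (j : Fin d))) i| < 1) :=
  l1_source_condition_general X S w XS hXS Xp h1 hsupp hinj hirr
end

section
/- Let w* ∈ ℝ^d be supported on S ⊆ {1,...,d} with |w*_i| = γ > 0 for all i ∈ S, and suppose X_S is injective. Then the condition max_{ℓ ∉ S} |⟨X_S† x_ℓ, w*_S⟩| < min_{j ∈ S} |⟨X_S† x_j, w*_S⟩| holds if and only if max_{ℓ ∉ S} |⟨X_S† x_ℓ, sgn(w*_S)⟩| < 1. -/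
/-! Since `X_S† X_S = 1`, the pseudo-inverse sends the column `x_j` (`j ∈ S`) to the basis
vector `e_j`, so `⟨X_S† x_j, w*_S⟩ = w*_j` has absolute value `γ` for every `j ∈ S`. On the
other hand `w*_S = γ • sgn(w*_S)`, so every off-support quantity `|⟨X_S† x_ℓ, w*_S⟩|` is `γ`
times its sign counterpart; dividing by `γ > 0` gives the equivalence
(for `S = ∅` both sides hold trivially). -/

open Matrix

theorem Real.sign_mul_abs (x : ℝ) : Real.sign x * |x| = x := by
  rcases lt_trichotomy x 0 with hx | rfl | hx
  · rw [Real.sign_of_neg hx, abs_of_neg hx]; ring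
  · simp
  · rw [Real.sign_of_pos hx, abs_of_pos hx, one_mul]

theorem sum_mul_eq_mul_sum_mul_sign {ι : Type*} [Fintype ι] (c w : ι → ℝ) {γ : ℝ}
    (hw : ∀ i, |w i| = γ) : ∑ i, c i * w i = γ * ∑ i, c i * Real.sign (w i) := by
  rw [Finset.mul_sum]
  refine Finset.sum_congr rfl fun i _ => ?_
  conv_lhs => rw [← Real.sign_mul_abs (w i), hw i]
  ring

namespace Matrix

variable {m n R : Type*} [Fintype m] [Fintype n] [DecidableEq n] [Semiring R]

theorem mul_eq_one_of_mul_mul_self {A : Matrix m n R} {B : Matrix n m R} (h : A * B * A = A)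
    (hA : Function.Injective A.mulVec) : B * A = 1 :=
  ext_iff_mulVec.mpr fun v => hA <| by rw [mulVec_mulVec, ← Matrix.mul_assoc, h, one_mulVec]

theorem mulVec_col_of_mul_eq_one {A : Matrix m n R} {B : Matrix n m R} (h : B * A = 1)
    (k : n) : B *ᵥ A.col k = Pi.single k 1 := by
  rw [← mulVec_single_one, mulVec_mulVec, h, one_mulVec]

end Matrix

theorem equal_magnitude_conditions_equiv_general {n d : ℕ}
    (X : Matrix (Fin n) (Fin d) ℝ) (S : Finset (Fin d))
    (w : Fin d → ℝ) (γ : ℝ) (hγ : 0 < γ)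
    (habs : ∀ j ∈ S, |w j| = γ)
    (XS : Matrix (Fin n) S ℝ) (hXS : ∀ i (j : S), XS i j = X i (j : Fin d))
    (Xp : Matrix S (Fin n) ℝ)
    (h1 : XS * Xp * XS = XS)
    (hinj : Function.Injective XS.mulVec) :
    (∀ ℓ, ℓ ∉ S → ∀ j ∈ S,
        |∑ r : S, Xp.mulVec (fun i => X i ℓ) r * w (r : Fin d)| <
        |∑ r : S, Xp.mulVec (fun i => X i j) r * w (r : Fin d)|) ↔
    (∀ ℓ, ℓ ∉ S →
        |∑ r : S, Xp.mulVec (fun i => X i ℓ) r * Real.sign (w (r : Fin d))| < 1) := by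
  have hXpXS : Xp * XS = 1 := mul_eq_one_of_mul_mul_self h1 hinj
  have hon_support : ∀ j ∈ S, |∑ r : S, Xp.mulVec (fun i => X i j) r * w (r : Fin d)| = γ := by
    intro j hj
    have hcol : (fun i => X i j) = XS.col ⟨j, hj⟩ := funext fun i => (hXS i ⟨j, hj⟩).symm
    rw [hcol, mulVec_col_of_mul_eq_one hXpXS]
    simpa [Pi.single_apply] using habs j hj
  have hscale : ∀ ℓ, |∑ r : S, Xp.mulVec (fun i => X i ℓ) r * w (r : Fin d)| =
      γ * |∑ r : S, Xp.mulVec (fun i => X i ℓ) r * Real.sign (w (r : Fin d))| := fun ℓ => by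
    rw [sum_mul_eq_mul_sum_mul_sign _ (fun r : S => w r) fun r => habs r r.2, abs_mul,
      abs_of_pos hγ]
  constructor
  · intro H ℓ hℓ
    rcases S.eq_empty_or_nonempty with rfl | ⟨j, hj⟩
    · simp
    · have hℓj := H ℓ hℓ j hj
      rwa [hscale ℓ, hon_support j hj, mul_lt_iff_lt_one_right hγ] at hℓj
  · intro H ℓ hℓ j hj
    rw [hscale ℓ, hon_support j hj, mul_lt_iff_lt_one_right hγ]
    exact H ℓ hℓ

/-- If all nonzero entries of `w*` (supported on `S`) have the same absolute
value `γ > 0` and `X_S` is injective, then the k-support-norm recovery condition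
`max_{ℓ∉S} |⟨X_S† x_ℓ, w*_S⟩| < min_{j∈S} |⟨X_S† x_j, w*_S⟩|` holds iff the
ℓ1 irrepresentability condition `max_{ℓ∉S} |⟨X_S† x_ℓ, sgn(w*_S)⟩| < 1` holds. -/
theorem equal_magnitude_conditions_equiv {n d : ℕ}
    (X : Matrix (Fin n) (Fin d) ℝ) (S : Finset (Fin d))
    (w : Fin d → ℝ) (γ : ℝ) (hγ : 0 < γ)
    (hsupp : ∀ i, i ∉ S → w i = 0)
    (habs : ∀ j ∈ S, |w j| = γ)
    (XS : Matrix (Fin n) S ℝ) (hXS : ∀ i (j : S), XS i j = X i (j : Fin d))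
    (Xp : Matrix S (Fin n) ℝ)
    (h1 : XS * Xp * XS = XS) (h2 : Xp * XS * Xp = Xp)
    (h3 : (XS * Xp)ᵀ = XS * Xp) (h4 : (Xp * XS)ᵀ = Xp * XS)
    (hinj : Function.Injective XS.mulVec) :
    (∀ ℓ, ℓ ∉ S → ∀ j ∈ S,
        |∑ r : S, Xp.mulVec (fun i => X i ℓ) r * w (r : Fin d)| <
        |∑ r : S, Xp.mulVec (fun i => X i j) r * w (r : Fin d)|) ↔
    (∀ ℓ, ℓ ∉ S →
        |∑ r : S, Xp.mulVec (fun i => X i ℓ) r * Real.sign (w (r : Fin d))| < 1) :=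
  equal_magnitude_conditions_equiv_general X S w γ hγ habs XS hXS Xp h1 hinj
end
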